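/- A closed model category C is left proper if and only if for every weak equivalence g: X→Y in C, the Quillen adjunction (g_!, g^*): (X↓C) → (Y↓C) is a Quillen equivalence. -/

import Mathlib

open CategoryTheory CategoryTheory.Limits

universe v u v' u'

/-- `f` is a retract of `g` in the arrow category. -/
def IsRetractOfArrow {C : Type u} [Category.{v} C] {A B A' B' : C}
    (f : A ⟶ B) (g : A' ⟶ B') : Prop :=
  ∃ (i : Arrow.mk f ⟶ Arrow.mk g) (r : Arrow.mk g ⟶ Arrow.mk f), i ≫ r = 𝟙 (Arrow.mk f)

/-- A (closed) model structure on a category `C`, in the sense of Quillen: three classes of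
morphisms (cofibrations, fibrations, weak equivalences) satisfying the two-out-of-three
axiom, closure under retracts, the lifting axioms and the factorization axioms. -/
structure ModelStruct (C : Type u) [Category.{v} C] : Type (max u v) where
  cof : MorphismProperty C
  fib : MorphismProperty C
  weq : MorphismProperty C
  weq_comp : ∀ {X Y Z : C} (f : X ⟶ Y) (g : Y ⟶ Z), weq f → weq g → weq (f ≫ g)
  weq_cancel_left : ∀ {X Y Z : C} (f : X ⟶ Y) (g : Y ⟶ Z), weq f → weq (f ≫ g) → weq g
  weq_cancel_right : ∀ {X Y Z : C} (f : X ⟶ Y) (g : Y ⟶ Z), weq g → weq (f ≫ g) → weq f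
  cof_retract : ∀ {A B A' B' : C} {f : A ⟶ B} {g : A' ⟶ B'},
    IsRetractOfArrow f g → cof g → cof f
  fib_retract : ∀ {A B A' B' : C} {f : A ⟶ B} {g : A' ⟶ B'},
    IsRetractOfArrow f g → fib g → fib f
  weq_retract : ∀ {A B A' B' : C} {f : A ⟶ B} {g : A' ⟶ B'},
    IsRetractOfArrow f g → weq g → weq f
  lifting_cof_trivFib : ∀ {A B X Y : C} (i : A ⟶ B) (p : X ⟶ Y),
    cof i → fib p → weq p → HasLiftingProperty i p
  lifting_trivCof_fib : ∀ {A B X Y : C} (i : A ⟶ B) (p : X ⟶ Y),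
    cof i → weq i → fib p → HasLiftingProperty i p
  factor_cof_trivFib : ∀ {X Y : C} (f : X ⟶ Y),
    ∃ (Z : C) (i : X ⟶ Z) (p : Z ⟶ Y), cof i ∧ fib p ∧ weq p ∧ i ≫ p = f
  factor_trivCof_fib : ∀ {X Y : C} (f : X ⟶ Y),
    ∃ (Z : C) (i : X ⟶ Z) (p : Z ⟶ Y), cof i ∧ weq i ∧ fib p ∧ i ≫ p = f

variable {C : Type u} [Category.{v} C]

/-- An object is cofibrant if the unique map from the initial object to it is a cofibration. -/
def ModelStruct.Cofibrant [HasInitial C] (M : ModelStruct C) (A : C) : Prop :=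
  M.cof (initial.to A)

/-- An object is fibrant if the unique map from it to the terminal object is a fibration. -/
def ModelStruct.Fibrant [HasTerminal C] (M : ModelStruct C) (A : C) : Prop :=
  M.fib (terminal.from A)

/-- The induced model structure on the coslice category `(X ↓ C)`: a morphism is a
cofibration, fibration or weak equivalence iff its underlying morphism in `C` is one. -/
def ModelStruct.under (M : ModelStruct C) (X : C) : ModelStruct (Under X) where
  cof _ _ f := M.cof f.right
  fib _ _ f := M.fib f.right
  weq _ _ f := M.weq f.right
  weq_comp f g hf hg := by simpa using M.weq_comp f.right g.right hf hg
  weq_cancel_left f g hf hfg := M.weq_cancel_left f.right g.right hf (by simpa using hfg)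
  weq_cancel_right f g hg hfg := M.weq_cancel_right f.right g.right hg (by simpa using hfg)
  cof_retract := fun ⟨i, r, hir⟩ hg => M.cof_retract
    ⟨(Under.forget X).mapArrow.map i, (Under.forget X).mapArrow.map r,
      by have h := congrArg (fun k => (Under.forget X).mapArrow.map k) hir; simp only [CategoryTheory.Functor.map_comp, CategoryTheory.Functor.map_id] at h; exact h⟩ hg
  fib_retract := fun ⟨i, r, hir⟩ hg => M.fib_retract
    ⟨(Under.forget X).mapArrow.map i, (Under.forget X).mapArrow.map r,
      by have h := congrArg (fun k => (Under.forget X).mapArrow.map k) hir; simp only [CategoryTheory.Functor.map_comp, CategoryTheory.Functor.map_id] at h; exact h⟩ hg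
  weq_retract := fun ⟨i, r, hir⟩ hg => M.weq_retract
    ⟨(Under.forget X).mapArrow.map i, (Under.forget X).mapArrow.map r,
      by have h := congrArg (fun k => (Under.forget X).mapArrow.map k) hir; simp only [CategoryTheory.Functor.map_comp, CategoryTheory.Functor.map_id] at h; exact h⟩ hg
  lifting_cof_trivFib i p hi hp hp' := by
    constructor
    intro f g sq
    haveI := M.lifting_cof_trivFib i.right p.right hi hp hp'
    have sq' : CommSq f.right i.right p.right g.right :=
      ⟨by rw [← Under.comp_right, sq.w, Under.comp_right]⟩
    exact ⟨⟨⟨Under.homMk sq'.lift (by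
        rw [← Under.w i, Category.assoc, sq'.fac_left, Under.w f]),
      by ext; exact sq'.fac_left, by ext; exact sq'.fac_right⟩⟩⟩
  lifting_trivCof_fib i p hi hi' hp := by
    constructor
    intro f g sq
    haveI := M.lifting_trivCof_fib i.right p.right hi hi' hp
    have sq' : CommSq f.right i.right p.right g.right :=
      ⟨by rw [← Under.comp_right, sq.w, Under.comp_right]⟩
    exact ⟨⟨⟨Under.homMk sq'.lift (by
        rw [← Under.w i, Category.assoc, sq'.fac_left, Under.w f]),
      by ext; exact sq'.fac_left, by ext; exact sq'.fac_right⟩⟩⟩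
  factor_cof_trivFib {A B} f := by
    obtain ⟨Z, i, p, hi, hp, hp', hfac⟩ := M.factor_cof_trivFib f.right
    exact ⟨Under.mk (A.hom ≫ i), Under.homMk i rfl,
      Under.homMk p (by show (A.hom ≫ i) ≫ p = B.hom; rw [Category.assoc, hfac, Under.w f]),
      hi, hp, hp', by ext; exact hfac⟩
  factor_trivCof_fib {A B} f := by
    obtain ⟨Z, i, p, hi, hi', hp, hfac⟩ := M.factor_trivCof_fib f.right
    exact ⟨Under.mk (A.hom ≫ i), Under.homMk i rfl,
      Under.homMk p (by show (A.hom ≫ i) ≫ p = B.hom; rw [Category.assoc, hfac, Under.w f]),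
      hi, hi', hp, by ext; exact hfac⟩

/-- The induced model structure on the slice category `(C ↓ X)`: a morphism is a
cofibration, fibration or weak equivalence iff its underlying morphism in `C` is one. -/
def ModelStruct.over (M : ModelStruct C) (X : C) : ModelStruct (Over X) where
  cof _ _ f := M.cof f.left
  fib _ _ f := M.fib f.left
  weq _ _ f := M.weq f.left
  weq_comp f g hf hg := by simpa using M.weq_comp f.left g.left hf hg
  weq_cancel_left f g hf hfg := M.weq_cancel_left f.left g.left hf (by simpa using hfg)
  weq_cancel_right f g hg hfg := M.weq_cancel_right f.left g.left hg (by simpa using hfg)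
  cof_retract := fun ⟨i, r, hir⟩ hg => M.cof_retract
    ⟨(Over.forget X).mapArrow.map i, (Over.forget X).mapArrow.map r,
      by have h := congrArg (fun k => (Over.forget X).mapArrow.map k) hir; simp only [CategoryTheory.Functor.map_comp, CategoryTheory.Functor.map_id] at h; exact h⟩ hg
  fib_retract := fun ⟨i, r, hir⟩ hg => M.fib_retract
    ⟨(Over.forget X).mapArrow.map i, (Over.forget X).mapArrow.map r,
      by have h := congrArg (fun k => (Over.forget X).mapArrow.map k) hir; simp only [CategoryTheory.Functor.map_comp, CategoryTheory.Functor.map_id] at h; exact h⟩ hg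
  weq_retract := fun ⟨i, r, hir⟩ hg => M.weq_retract
    ⟨(Over.forget X).mapArrow.map i, (Over.forget X).mapArrow.map r,
      by have h := congrArg (fun k => (Over.forget X).mapArrow.map k) hir; simp only [CategoryTheory.Functor.map_comp, CategoryTheory.Functor.map_id] at h; exact h⟩ hg
  lifting_cof_trivFib i p hi hp hp' := by
    constructor
    intro f g sq
    haveI := M.lifting_cof_trivFib i.left p.left hi hp hp'
    have sq' : CommSq f.left i.left p.left g.left :=
      ⟨by rw [← Over.comp_left, sq.w, Over.comp_left]⟩
    exact ⟨⟨⟨Over.homMk sq'.lift (by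
        rw [← Over.w p, ← Category.assoc, sq'.fac_right, Over.w g]),
      by ext; exact sq'.fac_left, by ext; exact sq'.fac_right⟩⟩⟩
  lifting_trivCof_fib i p hi hi' hp := by
    constructor
    intro f g sq
    haveI := M.lifting_trivCof_fib i.left p.left hi hi' hp
    have sq' : CommSq f.left i.left p.left g.left :=
      ⟨by rw [← Over.comp_left, sq.w, Over.comp_left]⟩
    exact ⟨⟨⟨Over.homMk sq'.lift (by
        rw [← Over.w p, ← Category.assoc, sq'.fac_right, Over.w g]),
      by ext; exact sq'.fac_left, by ext; exact sq'.fac_right⟩⟩⟩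
  factor_cof_trivFib {A B} f := by
    obtain ⟨Z, i, p, hi, hp, hp', hfac⟩ := M.factor_cof_trivFib f.left
    exact ⟨Over.mk (p ≫ B.hom), Over.homMk i (by show i ≫ (p ≫ B.hom) = A.hom; rw [← Category.assoc, hfac, Over.w f]),
      Over.homMk p rfl, hi, hp, hp', by ext; exact hfac⟩
  factor_trivCof_fib {A B} f := by
    obtain ⟨Z, i, p, hi, hi', hp, hfac⟩ := M.factor_trivCof_fib f.left
    exact ⟨Over.mk (p ≫ B.hom), Over.homMk i (by show i ≫ (p ≫ B.hom) = A.hom; rw [← Category.assoc, hfac, Over.w f]),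
      Over.homMk p rfl, hi, hi', hp, by ext; exact hfac⟩

noncomputable instance (X : C) : HasInitial (Under X) :=
  Under.mkIdInitial.hasInitial

noncomputable instance (X : C) : HasTerminal (Over X) :=
  Over.mkIdTerminal.hasTerminal

/-- The terminal object of `(X ↓ C)` is `X ⟶ *`. -/
noncomputable def underMkTerminal [HasTerminal C] (X : C) :
    IsTerminal (Under.mk (terminal.from X)) :=
  IsTerminal.ofUniqueHom (fun u => Under.homMk (terminal.from u.right)
      (terminal.hom_ext _ _))
    (fun u m => by ext; exact terminal.hom_ext _ _)

noncomputable instance [HasTerminal C] (X : C) : HasTerminal (Under X) :=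
  (underMkTerminal X).hasTerminal

/-- The initial object of `(C ↓ X)` is `∅ ⟶ X`. -/
noncomputable def overMkInitial [HasInitial C] (X : C) :
    IsInitial (Over.mk (initial.to X)) :=
  IsInitial.ofUniqueHom (fun u => Over.homMk (initial.to u.left)
      (initial.hom_ext _ _))
    (fun u m => by ext; exact initial.hom_ext _ _)

noncomputable instance [HasInitial C] (X : C) : HasInitial (Over X) :=
  (overMkInitial X).hasInitial

/-- A Quillen adjunction between model categories: an adjoint pair whose left adjoint
preserves cofibrations and acyclic cofibrations. -/
structure QuillenAdjunction {C : Type u} [Category.{v} C] {D : Type u'} [Category.{v'} D]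
    (M : ModelStruct C) (N : ModelStruct D) (F : C ⥤ D) (G : D ⥤ C) where
  adj : F ⊣ G
  map_cof : ∀ {A B : C} (f : A ⟶ B), M.cof f → N.cof (F.map f)
  map_trivCof_weq : ∀ {A B : C} (f : A ⟶ B), M.cof f → M.weq f → N.weq (F.map f)

/-- A Quillen adjunction is a Quillen equivalence if for every cofibrant `A` and fibrant `B`,
a map `F A ⟶ B` is a weak equivalence iff its adjunct `A ⟶ G B` is. -/
def IsQuillenEquivalence {C : Type u} [Category.{v} C] {D : Type u'} [Category.{v'} D]
    [HasInitial C] [HasTerminal D]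
    (M : ModelStruct C) (N : ModelStruct D) {F : C ⥤ D} {G : D ⥤ C} (adj : F ⊣ G) : Prop :=
  ∀ (A : C) (B : D), M.Cofibrant A → N.Fibrant B →
    ∀ f : F.obj A ⟶ B, N.weq f ↔ M.weq ((adj.homEquiv A B) f)


/-- A closed model category is left proper if every cobase change of a weak equivalence along
a cofibration is a weak equivalence. -/
def ModelStruct.LeftProper {C : Type u} [Category.{v} C] [HasPushouts C]
    (M : ModelStruct C) : Prop :=
  ∀ {X Y Z : C} (g : X ⟶ Y) (u : X ⟶ Z), M.weq g → M.cof u → M.weq (pushout.inl u g)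

/-! The adjunct of `f : g_! A ⟶ B` is `pushout.inl A.hom g ≫ f.right`. If `A` is cofibrant and
`C` is left proper, `pushout.inl A.hom g` is a weak equivalence, and two-out-of-three gives the
Quillen equivalence. Conversely, for a cofibration `u` test the equivalence on a fibrant
replacement `i : pushout u g ⟶ B` by a trivial cofibration: its adjunct `pushout.inl u g ≫ i`
is a weak equivalence, hence so is `pushout.inl u g`. -/

lemma IsRetractOfArrow.of_iso {A B A' B' : C} {f : A ⟶ B} {g : A' ⟶ B'}
    (e : Arrow.mk f ≅ Arrow.mk g) : IsRetractOfArrow f g :=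
  ⟨e.hom, e.inv, e.hom_inv_id⟩

lemma Under.mapPushoutAdj_homEquiv_right [HasPushouts C] {X Y : C} (g : X ⟶ Y) (A : Under X)
    (B : Under Y) (f : (Under.pushout g).obj A ⟶ B) :
    ((Under.mapPushoutAdj g).homEquiv A B f).right = pushout.inl A.hom g ≫ f.right := by
  simp only [Adjunction.homEquiv_unit, Under.mapPushoutAdj_unit_app]
  rfl

namespace ModelStruct

variable (M : ModelStruct C)

instance cof_respectsIso : M.cof.RespectsIso :=
  .of_respects_arrow_iso _ fun _ _ e hf => M.cof_retract (.of_iso e.symm) hf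

instance fib_respectsIso : M.fib.RespectsIso :=
  .of_respects_arrow_iso _ fun _ _ e hf => M.fib_retract (.of_iso e.symm) hf

lemma cofibrant_iff_of_isInitial [HasInitial C] {I : C} (hI : IsInitial I) (A : C) :
    M.Cofibrant A ↔ M.cof (hI.to A) :=
  M.cof.arrow_mk_iso_iff (Arrow.isoMk (initialIsoIsInitial hI) (Iso.refl A))

lemma fibrant_iff_of_isTerminal [HasTerminal C] {T : C} (hT : IsTerminal T) (B : C) :
    M.Fibrant B ↔ M.fib (hT.from B) :=
  M.fib.arrow_mk_iso_iff (Arrow.isoMk (Iso.refl B) (terminalIsoIsTerminal hT))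

lemma cofibrant_under_iff {X : C} (A : Under X) : (M.under X).Cofibrant A ↔ M.cof A.hom :=
  ((M.under X).cofibrant_iff_of_isInitial Under.mkIdInitial A).trans <| by
    rw [← Under.mkIdInitial_to_right]; rfl

lemma fibrant_under_iff [HasTerminal C] {X : C} (B : Under X) :
    (M.under X).Fibrant B ↔ M.Fibrant B.right :=
  (M.under X).fibrant_iff_of_isTerminal (underMkTerminal X) B

lemma weq_comp_iff_of_weq_left {X Y Z : C} {f : X ⟶ Y} (g : Y ⟶ Z) (hf : M.weq f) :
    M.weq (f ≫ g) ↔ M.weq g :=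
  ⟨M.weq_cancel_left f g hf, M.weq_comp f g hf⟩

lemma exists_trivCof_fibrant [HasTerminal C] (X : C) :
    ∃ (Z : C) (i : X ⟶ Z), M.cof i ∧ M.weq i ∧ M.Fibrant Z := by
  obtain ⟨Z, i, p, hi, hi', hp, -⟩ := M.factor_trivCof_fib (terminal.from X)
  exact ⟨Z, i, hi, hi', by rwa [Fibrant, Subsingleton.elim (terminal.from Z) p]⟩

lemma under_weq_mapPushoutAdj_homEquiv_iff [HasPushouts C] {X Y : C} (g : X ⟶ Y)
    (A : Under X) (B : Under Y) (f : (Under.pushout g).obj A ⟶ B) :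
    (M.under X).weq ((Under.mapPushoutAdj g).homEquiv A B f) ↔
      M.weq (pushout.inl A.hom g ≫ f.right) := by
  show M.weq ((Under.mapPushoutAdj g).homEquiv A B f).right ↔ _
  rw [Under.mapPushoutAdj_homEquiv_right]
  exact Iff.rfl

end ModelStruct

/-- **Statement 14.** A closed model category `C` is left proper if and only if
`(g_!, g^*) : (X ↓ C) → (Y ↓ C)` is a Quillen equivalence for every weak equivalence
`g : X ⟶ Y`. -/
theorem left_proper_iff {C : Type u} [Category.{v} C]
    [HasLimits C] [HasColimits C] (M : ModelStruct C) :
    M.LeftProper ↔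
      ∀ {X Y : C} (g : X ⟶ Y), M.weq g →
        IsQuillenEquivalence (M.under X) (M.under Y) (Under.mapPushoutAdj g) := by
  refine ⟨fun hlp X Y g hg A B hA _ f => ?_, fun hqe X Y Z g u hg hu => ?_⟩
  · have hinl : M.weq (pushout.inl A.hom g) := hlp g A.hom hg ((M.cofibrant_under_iff A).mp hA)
    exact (M.weq_comp_iff_of_weq_left f.right hinl).symm.trans
      (M.under_weq_mapPushoutAdj_homEquiv_iff g A B f).symm
  · obtain ⟨B, i, -, hi, hB⟩ := M.exists_trivCof_fibrant (pushout u g)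
    have hadj := (hqe g hg (Under.mk u) (Under.mk (pushout.inr u g ≫ i))
      ((M.cofibrant_under_iff _).mpr hu) ((M.fibrant_under_iff _).mpr hB)
      (Under.homMk i)).mp hi
    rw [M.under_weq_mapPushoutAdj_homEquiv_iff] at hadj
    exact M.weq_cancel_right _ i hi hadj
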